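/- Let G be a finite simple graph of order n ≥ 4 with girth g(G) ≥ 6 (where an acyclic graph is taken to have infinite girth, hence satisfies this condition) and matching number ν(G). Then gp(μ(G)) ≤ 2n − 2·ν(G). -/

import Mathlib

open SimpleGraph

variable {V : Type*}

/-- The Mycielskian of a graph `G`: vertices are `some (Sum.inl v)` (original vertices),
`some (Sum.inr v)` (twin vertices), and `none` (the root `u*`). -/
def Mycielskian (G : SimpleGraph V) : SimpleGraph (Option (V ⊕ V)) :=
  SimpleGraph.fromRel (fun x y =>
    (∃ u v, G.Adj u v ∧ x = some (Sum.inl u) ∧ y = some (Sum.inl v)) ∨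
    (∃ u v, G.Adj u v ∧ x = some (Sum.inl u) ∧ y = some (Sum.inr v)) ∨
    (∃ u, x = some (Sum.inr u) ∧ y = none))

/-- `S` is a general position set: no shortest path between two vertices of `S`
contains a third element of `S`. -/
def IsGPSet (G : SimpleGraph V) (S : Set V) : Prop :=
  ∀ u ∈ S, ∀ v ∈ S, ∀ p : G.Walk u v, p.length = G.dist u v →
    ∀ w ∈ S, w ∈ p.support → w = u ∨ w = v

/-- The general position number of `G`: the maximum cardinality of a general position set. -/
noncomputable def gpNumber (G : SimpleGraph V) [Fintype V] : ℕ :=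
  sSup {k | ∃ S : Set V, IsGPSet G S ∧ S.ncard = k}

/-- A gp-set: a general position set of maximum cardinality. -/
def IsGpSet (G : SimpleGraph V) [Fintype V] (S : Set V) : Prop :=
  IsGPSet G S ∧ S.ncard = gpNumber G

/-- The matching number of `G`: the maximum number of pairwise disjoint edges. -/
noncomputable def matchingNumber (G : SimpleGraph V) [Fintype V] : ℕ :=
  sSup {k | ∃ M : Set (Sym2 V), M ⊆ G.edgeSet ∧
    (∀ e ∈ M, ∀ f ∈ M, e ≠ f → ∀ v : V, v ∈ e → v ∉ f) ∧ M.ncard = k}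


/-!
Write `A` and `B` for the vertices whose original, resp. twin, lies in a general position set `S`
of `μ(G)`, and fix a maximum matching `M`. If `S` misses the root and contains no `x, x', y'` with
`xy ∈ E(G)`, every edge `xy ∈ M` meets `S` in at most two of `x, y, x', y'`, because `y` lies on
the geodesic `x y x'`; summing over `M` gives the bound. If the root is in `S`, it lies between
any two twins, so `|B| ≤ 1`, and between any two originals at distance at least four in `G`;
with girth at least six this leaves at least two vertices outside `A` as soon as `M` has two
edges. If `x, x', y' ∈ S`, then `x` is the only vertex in `A ∩ B`, and either some vertex lies
outside `A ∪ B` or every edge of `G` contains `y`, so that `ν(G) ≤ 1`.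
-/

open Finset

namespace SimpleGraph

variable {G : SimpleGraph V} {a b c d e : V}

theorem egirth_le_three (hab : G.Adj a b) (hbc : G.Adj b c) (hca : G.Adj c a) :
    G.egirth ≤ 3 :=
  egirth_le_length (w := .cons hab (.cons hbc (.cons hca .nil))) <| by
    simp [Walk.cons_isCycle_iff, hab.ne, hbc.ne, hca.ne, hab.ne.symm, hca.ne.symm]

theorem not_adj_of_adj_of_adj (hg : 3 < G.egirth) (hab : G.Adj a b) (hbc : G.Adj b c) :
    ¬ G.Adj c a :=
  fun hca => (hg.trans_le (egirth_le_three hab hbc hca)).false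

theorem egirth_le_five (hab : G.Adj a b) (hbc : G.Adj b c) (hcd : G.Adj c d) (hde : G.Adj d e)
    (hea : G.Adj e a) (hac : a ≠ c) (had : a ≠ d) (hbd : b ≠ d) (hbe : b ≠ e)
    (hce : c ≠ e) : G.egirth ≤ 5 :=
  Walk.IsCircuit.egirth_le_length
    (w := .cons hab (.cons hbc (.cons hcd (.cons hde (.cons hea .nil))))) <| by
    simp [Walk.isCircuit_def, Walk.isTrail_def, hab.ne, hbc.ne, hcd.ne, hde.ne, hea.ne,
      hab.ne.symm, hea.ne.symm, hac, had, hbd, hbe, hce, hac.symm, had.symm]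

def IsMatchingEdgeSet (G : SimpleGraph V) (M : Set (Sym2 V)) : Prop :=
  M ⊆ G.edgeSet ∧ ∀ e ∈ M, ∀ f ∈ M, e ≠ f → ∀ v : V, v ∈ e → v ∉ f

theorem exists_isMatchingEdgeSet_card_eq_matchingNumber [Fintype V] (G : SimpleGraph V) :
    ∃ M : Finset (Sym2 V), G.IsMatchingEdgeSet M ∧ #M = matchingNumber G := by
  set K := {k | ∃ M : Set (Sym2 V), M ⊆ G.edgeSet ∧
    (∀ e ∈ M, ∀ f ∈ M, e ≠ f → ∀ v : V, v ∈ e → v ∉ f) ∧ M.ncard = k}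
  have hbdd : BddAbove K := ⟨Fintype.card (Sym2 V), by
    rintro k ⟨M, -, -, rfl⟩
    exact (Set.ncard_le_card M).trans_eq Nat.card_eq_fintype_card⟩
  obtain ⟨M, hMG, hMdisj, hMcard⟩ := Nat.sSup_mem (s := K) ⟨0, ∅, by simp⟩ hbdd
  refine ⟨M.toFinite.toFinset, ?_, ?_⟩
  · rw [Set.Finite.coe_toFinset]
    exact ⟨hMG, hMdisj⟩
  · rw [← Set.ncard_eq_toFinset_card, hMcard]
    rfl

namespace IsMatchingEdgeSet

variable {M : Finset (Sym2 V)}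

theorem exists_disjoint_edges (hM : G.IsMatchingEdgeSet M) (h : 1 < #M) :
    ∃ a b c d, G.Adj a b ∧ G.Adj c d ∧ a ≠ c ∧ a ≠ d ∧ b ≠ c ∧ b ≠ d := by
  obtain ⟨e, he, e', he', hne⟩ := one_lt_card.1 h
  induction e using Sym2.ind with | _ a b =>
  induction e' using Sym2.ind with | _ c d =>
  have hdisj := hM.2 _ he _ he' hne
  refine ⟨a, b, c, d, hM.1 he, hM.1 he', ?_, ?_, ?_, ?_⟩ <;> rintro rfl <;> simp at hdisj

variable [Fintype V] [DecidableEq V]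

theorem sum_add_two_mul_card_le (hM : G.IsMatchingEdgeSet M) {f : V → ℕ}
    (hf : ∀ v, f v ≤ 2) (hfM : ∀ x y, s(x, y) ∈ M → f x + f y ≤ 2) :
    ∑ v, f v + 2 * #M ≤ 2 * Fintype.card V := by
  set U := M.biUnion Sym2.toFinset
  have hnd : ∀ e ∈ M, ¬ e.IsDiag := fun e he => G.not_isDiag_of_mem_edgeSet (hM.1 he)
  have hdisj : (M : Set (Sym2 V)).PairwiseDisjoint Sym2.toFinset := fun e he e' he' hne =>
    Finset.disjoint_left.2 fun v hv hv' =>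
      hM.2 e he e' he' hne v (Sym2.mem_toFinset.1 hv) (Sym2.mem_toFinset.1 hv')
  have hU : #U = 2 * #M := by
    rw [card_biUnion hdisj, sum_congr rfl fun e he => Sym2.card_toFinset_of_not_isDiag e (hnd e he),
      sum_const, smul_eq_mul, mul_comm]
  have hin : ∑ v ∈ U, f v ≤ 2 * #M := by
    rw [sum_biUnion hdisj]
    calc ∑ e ∈ M, ∑ v ∈ e.toFinset, f v ≤ ∑ e ∈ M, 2 := sum_le_sum fun e he => by
            induction e using Sym2.ind with
            | _ x y =>
              have hxy : x ≠ y := by simpa using hnd _ he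
              rw [Sym2.toFinset_mk_eq, sum_pair hxy]
              exact hfM x y he
      _ = 2 * #M := by rw [sum_const, smul_eq_mul, mul_comm]
  have hout : ∑ v ∈ Uᶜ, f v ≤ 2 * #Uᶜ := by
    simpa [mul_comm] using sum_le_card_nsmul Uᶜ f 2 fun v _ => hf v
  have := sum_add_sum_compl U f
  have := card_add_card_compl U
  omega

theorem two_mul_card_le (hM : G.IsMatchingEdgeSet M) : 2 * #M ≤ Fintype.card V := by
  have := hM.sum_add_two_mul_card_le (f := fun _ => 1) (fun _ => one_le_two) fun _ _ _ => le_rfl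
  simp only [sum_const, card_univ, smul_eq_mul, mul_one] at this
  omega

end IsMatchingEdgeSet

end SimpleGraph

namespace IsGPSet

variable {H : SimpleGraph V} {S : Set V} {u v w : V}

theorem notMem_of_mem_support (hS : IsGPSet H S) (hu : u ∈ S) (hv : v ∈ S) (p : H.Walk u v)
    (hp : ∀ q : H.Walk u v, p.length ≤ q.length) (hw : w ∈ p.support) (hwu : w ≠ u)
    (hwv : w ≠ v) : w ∉ S := fun hwS => by
  obtain ⟨q, hq⟩ := p.reachable.exists_walk_length_eq_dist
  exact (hS u hu v hv p (le_antisymm (hq ▸ hp q) (dist_le p)) w hwS hw).elim hwu hwv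

theorem eq_or_adj_of_adj_of_adj (hS : IsGPSet H S) (hu : u ∈ S) (hv : v ∈ S) (hw : w ∈ S)
    (huw : H.Adj u w) (hwv : H.Adj w v) : u = v ∨ H.Adj u v := by
  by_contra! h
  refine hS.notMem_of_mem_support hu hv (.cons huw (.cons hwv .nil)) (fun q => ?_) (by simp)
    huw.ne' hwv.ne hw
  rcases q with _ | ⟨_, _ | _⟩
  · exact absurd rfl h.1
  · exact absurd ‹H.Adj u v› h.2
  · simp

end IsGPSet

namespace Mycielskian

abbrev orig (x : V) : Option (V ⊕ V) := some (.inl x)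

abbrev twin (x : V) : Option (V ⊕ V) := some (.inr x)

variable {G : SimpleGraph V} {x y : V}

@[simp] theorem adj_orig_orig : (Mycielskian G).Adj (orig x) (orig y) ↔ G.Adj x y := by
  simp [Mycielskian, fromRel_adj]
  exact ⟨fun h => h.2.elim id .symm, fun h => ⟨h.ne, .inl h⟩⟩

@[simp] theorem adj_orig_twin : (Mycielskian G).Adj (orig x) (twin y) ↔ G.Adj x y := by
  simp [Mycielskian, fromRel_adj]

@[simp] theorem adj_twin_orig : (Mycielskian G).Adj (twin x) (orig y) ↔ G.Adj x y := by
  simp [Mycielskian, fromRel_adj, G.adj_comm]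

@[simp] theorem not_adj_twin_twin : ¬ (Mycielskian G).Adj (twin x) (twin y) := by
  simp [Mycielskian, fromRel_adj]

@[simp] theorem adj_twin_root : (Mycielskian G).Adj (twin x) none := by
  simp [Mycielskian, fromRel_adj]

@[simp] theorem adj_root_twin : (Mycielskian G).Adj none (twin x) := by
  simp [Mycielskian, fromRel_adj]

@[simp] theorem not_adj_orig_root : ¬ (Mycielskian G).Adj (orig x) none := by
  simp [Mycielskian, fromRel_adj]

@[simp] theorem not_adj_root_orig : ¬ (Mycielskian G).Adj none (orig x) := by
  simp [Mycielskian, fromRel_adj]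

theorem three_le_length_orig_orig (hne : x ≠ y) (hadj : ¬ G.Adj x y)
    (hno : ∀ m, G.Adj x m → ¬ G.Adj m y) (q : (Mycielskian G).Walk (orig x) (orig y)) :
    3 ≤ q.length := by
  rcases q with _ | @⟨_, w, _, h₁, _ | @⟨_, _, _, h₂, _ | _⟩⟩ <;>
    simp only [Walk.length_cons, Walk.length_nil]
  · exact absurd rfl hne
  · simp_all
  · rcases w with _ | w | w <;> simp_all
  · omega

theorem three_le_length_orig_twin (hadj : ¬ G.Adj x y)
    (hno : ∀ m, G.Adj x m → ¬ G.Adj m y) (q : (Mycielskian G).Walk (orig x) (twin y)) :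
    3 ≤ q.length := by
  rcases q with _ | @⟨_, w, _, h₁, _ | @⟨_, _, _, h₂, _ | _⟩⟩ <;>
    simp only [Walk.length_cons, Walk.length_nil]
  · simp_all
  · rcases w with _ | w | w <;> simp_all
  · omega

theorem four_le_length_orig_orig (hne : x ≠ y) (hadj : ¬ G.Adj x y)
    (hno : ∀ m, G.Adj x m → ¬ G.Adj m y)
    (hno' : ∀ a b, G.Adj x a → G.Adj a b → ¬ G.Adj b y)
    (q : (Mycielskian G).Walk (orig x) (orig y)) : 4 ≤ q.length := by
  rcases q with _ | @⟨_, w, _, h₁, _ | @⟨_, w', _, h₂, _ | @⟨_, _, _, h₃, _ | _⟩⟩⟩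
    <;> simp only [Walk.length_cons, Walk.length_nil]
  · exact absurd rfl hne
  · simp_all
  · rcases w with _ | w | w <;> simp_all
  · rcases w with _ | w | w <;> rcases w' with _ | w' | w' <;> simp_all <;>
      exact hno' _ _ h₁ h₂ h₃
  · omega

theorem ncard_eq [Fintype V] (S : Set (Option (V ⊕ V))) [DecidablePred (· ∈ S)] :
    S.ncard = (if none ∈ S then 1 else 0) + #{x | orig x ∈ S} + #{x | twin x ∈ S} := by
  rw [Set.ncard_eq_toFinset_card', ← Set.filter_mem_univ_eq_toFinset, card_filter,
    Fintype.sum_option, Fintype.sum_sum_type, card_filter, card_filter, add_assoc]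

variable {S : Set (Option (V ⊕ V))} {u v z m a b c d : V}

theorem twin_eq_of_root_mem (hS : IsGPSet (Mycielskian G) S) (hr : none ∈ S)
    (hx : twin x ∈ S) (hy : twin y ∈ S) : x = y := by
  simpa using hS.eq_or_adj_of_adj_of_adj hx hy hr adj_twin_root adj_root_twin

theorem twin_eq_of_orig_mem (hS : IsGPSet (Mycielskian G) S) (hu : orig u ∈ S)
    (hx : twin x ∈ S) (hy : twin y ∈ S) (hux : G.Adj u x) (huy : G.Adj u y) : x = y := by
  simpa using hS.eq_or_adj_of_adj_of_adj hx hy hu (adj_twin_orig.2 hux.symm) (adj_orig_twin.2 huy)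

theorem eq_of_orig_mem_of_adj_of_adj (hS : IsGPSet (Mycielskian G) S) (hg : 3 < G.egirth)
    (ha : orig a ∈ S) (hb : orig b ∈ S) (hc : orig c ∈ S) (hab : G.Adj a b)
    (hac : G.Adj a c) : b = c := by
  have := hS.eq_or_adj_of_adj_of_adj hb hc ha (adj_orig_orig.2 hab.symm) (adj_orig_orig.2 hac)
  simpa [G.not_adj_of_adj_of_adj hg hac.symm hab] using this

theorem orig_notMem_of_adj (hS : IsGPSet (Mycielskian G) S) (hx : orig x ∈ S)
    (hx' : twin x ∈ S) (hxy : G.Adj x y) : orig y ∉ S := fun hy => by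
  simpa using hS.eq_or_adj_of_adj_of_adj hx hx' hy (adj_orig_orig.2 hxy) (adj_orig_twin.2 hxy.symm)

theorem orig_notMem_and_twin_notMem_of_adj_of_adj (hS : IsGPSet (Mycielskian G) S)
    (hx : orig x ∈ S) (hy : orig y ∈ S) (hne : x ≠ y) (hadj : ¬ G.Adj x y) (hxm : G.Adj x m)
    (hmy : G.Adj m y) : orig m ∉ S ∧ twin m ∉ S :=
  ⟨fun hm => by
    simpa [hne, hadj] using
      hS.eq_or_adj_of_adj_of_adj hx hy hm (adj_orig_orig.2 hxm) (adj_orig_orig.2 hmy),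
  fun hm => by
    simpa [hne, hadj] using
      hS.eq_or_adj_of_adj_of_adj hx hy hm (adj_orig_twin.2 hxm) (adj_twin_orig.2 hmy)⟩

theorem orig_notMem_and_twin_notMem_of_path_three (hS : IsGPSet (Mycielskian G) S)
    (hx : orig x ∈ S) (hy : orig y ∈ S) (hne : x ≠ y) (hadj : ¬ G.Adj x y)
    (hno : ∀ m, G.Adj x m → ¬ G.Adj m y) (hxa : G.Adj x a) (hab : G.Adj a b)
    (hby : G.Adj b y) : orig a ∉ S ∧ twin a ∉ S :=
  have hlen := three_le_length_orig_orig hne hadj hno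
  ⟨hS.notMem_of_mem_support hx hy
    (.cons (adj_orig_orig.2 hxa) (.cons (adj_orig_orig.2 hab) (.cons (adj_orig_orig.2 hby) .nil)))
    hlen (by simp) (by simpa using hxa.ne') (by rintro ⟨⟩; exact hadj hxa),
  hS.notMem_of_mem_support hx hy
    (.cons (adj_orig_twin.2 hxa) (.cons (adj_twin_orig.2 hab) (.cons (adj_orig_orig.2 hby) .nil)))
    hlen (by simp) (by simp) (by simp)⟩

theorem root_notMem_and_twin_notMem_of_far (hS : IsGPSet (Mycielskian G) S) (hx : orig x ∈ S)
    (hy : orig y ∈ S) (hne : x ≠ y) (hadj : ¬ G.Adj x y)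
    (hno : ∀ m, G.Adj x m → ¬ G.Adj m y)
    (hno' : ∀ a b, G.Adj x a → G.Adj a b → ¬ G.Adj b y) (hxc : G.Adj x c) (hyd : G.Adj y d) :
    none ∉ S ∧ twin c ∉ S := by
  let p : (Mycielskian G).Walk (orig x) (orig y) :=
    .cons (adj_orig_twin.2 hxc) (.cons adj_twin_root (.cons adj_root_twin
      (.cons (adj_twin_orig.2 hyd.symm) .nil)))
  have hlen := four_le_length_orig_orig hne hadj hno hno'
  exact ⟨hS.notMem_of_mem_support hx hy p hlen (by simp [p]) (by simp) (by simp),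
    hS.notMem_of_mem_support hx hy p hlen (by simp [p]) (by simp) (by simp)⟩

theorem adj_or_exists_adj_adj_of_twin_mem (hS : IsGPSet (Mycielskian G) S) (hu : orig u ∈ S)
    (hv : twin v ∈ S) (huv : G.Adj u v) (hz : twin z ∈ S) :
    G.Adj u z ∨ ∃ m, G.Adj u m ∧ G.Adj m z := by
  by_contra! h
  exact hS.notMem_of_mem_support hu hz
    (.cons (adj_orig_twin.2 huv) (.cons adj_twin_root (.cons adj_root_twin .nil)))
    (three_le_length_orig_twin h.1 h.2) (by simp) (by simp)
    (by rintro ⟨⟩; exact h.1 huv) hv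

theorem exists_adj_adj_orig_notMem_of_root_mem (hS : IsGPSet (Mycielskian G) S) (hr : none ∈ S)
    (hA : ∀ s t, orig s ∉ S → orig t ∉ S → s = t) (hx : orig x ∈ S) (hy : orig y ∈ S)
    (hne : x ≠ y) (hadj : ¬ G.Adj x y) (hxc : G.Adj x c) (hyd : G.Adj y d) :
    ∃ m, G.Adj x m ∧ G.Adj m y ∧ orig m ∉ S := by
  by_cases hcom : ∃ m, G.Adj x m ∧ G.Adj m y
  · obtain ⟨m, hxm, hmy⟩ := hcom
    exact ⟨m, hxm, hmy, (orig_notMem_and_twin_notMem_of_adj_of_adj hS hx hy hne hadj hxm hmy).1⟩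
  push Not at hcom
  obtain ⟨a, b, hxa, hab, hby⟩ : ∃ a b, G.Adj x a ∧ G.Adj a b ∧ G.Adj b y := by
    by_contra! h
    exact (root_notMem_and_twin_notMem_of_far hS hx hy hne hadj hcom h hxc hyd).1 hr
  have ha := (orig_notMem_and_twin_notMem_of_path_three hS hx hy hne hadj hcom hxa hab hby).1
  have hb := (orig_notMem_and_twin_notMem_of_path_three hS hy hx hne.symm (fun h => hadj h.symm)
    (fun m hym hmx => hcom m hmx.symm hym.symm) hby.symm hab.symm hxa.symm).1
  exact absurd (hA a b ha hb) hab.ne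

theorem false_of_root_mem (hS : IsGPSet (Mycielskian G) S) (hg : 3 < G.egirth) (hr : none ∈ S)
    (hA : ∀ s t, orig s ∉ S → orig t ∉ S → s = t) (ha : orig a ∈ S) (hb : orig b ∈ S)
    (hc : orig c ∈ S) (hab : G.Adj a b) (hca : c ≠ a) (hcb : c ≠ b) (hcd : G.Adj c d) :
    False := by
  have hac : ¬ G.Adj a c := fun h => hcb (eq_of_orig_mem_of_adj_of_adj hS hg ha hb hc hab h).symm
  have hbc : ¬ G.Adj b c := fun h =>
    hca (eq_of_orig_mem_of_adj_of_adj hS hg hb ha hc hab.symm h).symm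
  obtain ⟨m, ham, -, hm⟩ :=
    exists_adj_adj_orig_notMem_of_root_mem hS hr hA ha hc hca.symm hac hab hcd
  obtain ⟨m', hbm', -, hm'⟩ :=
    exists_adj_adj_orig_notMem_of_root_mem hS hr hA hb hc hcb.symm hbc hab.symm hcd
  obtain rfl := hA m m' hm hm'
  exact G.not_adj_of_adj_of_adj hg hab hbm' ham.symm

theorem exists_two_orig_notMem_of_root_mem (hS : IsGPSet (Mycielskian G) S) (hg : 3 < G.egirth)
    (hr : none ∈ S) (hab : G.Adj a b) (hcd : G.Adj c d) (hac : a ≠ c) (had : a ≠ d)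
    (hbc : b ≠ c) (hbd : b ≠ d) : ∃ s t, s ≠ t ∧ orig s ∉ S ∧ orig t ∉ S := by
  by_contra! hA'
  have hA : ∀ s t, orig s ∉ S → orig t ∉ S → s = t := fun s t hs ht =>
    by_contra fun h => ht (hA' s t h hs)
  by_cases ha : orig a ∈ S; swap
  · exact false_of_root_mem hS hg hr hA (hA' a c hac ha) (hA' a d had ha) (hA' a b hab.ne ha)
      hcd hbc hbd hab.symm
  by_cases hb : orig b ∈ S; swap
  · exact false_of_root_mem hS hg hr hA (hA' b c hbc hb) (hA' b d hbd hb) ha hcd hac had hab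
  by_cases hc : orig c ∈ S
  · exact false_of_root_mem hS hg hr hA ha hb hc hab hac.symm hbc.symm hcd
  · exact false_of_root_mem hS hg hr hA ha hb (hA' c d hcd.ne hc) hab had.symm hbd.symm
      hcd.symm

theorem ncard_add_two_mul_card_le_of_root_mem [Fintype V] {M : Finset (Sym2 V)}
    (hS : IsGPSet (Mycielskian G) S) (hn : 4 ≤ Fintype.card V) (hg : 3 < G.egirth)
    (hr : none ∈ S) (hM : G.IsMatchingEdgeSet M) :
    S.ncard + 2 * #M ≤ 2 * Fintype.card V := by
  classical
  have hB : #{x | twin x ∈ S} ≤ 1 := card_le_one.2 fun x hx y hy =>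
    twin_eq_of_root_mem hS hr (mem_filter.1 hx).2 (mem_filter.1 hy).2
  have hA : #{x | orig x ∈ S} ≤ Fintype.card V := card_le_univ _
  rw [ncard_eq, if_pos hr]
  rcases le_or_gt #M 1 with hM1 | hM1
  · omega
  obtain ⟨a, b, c, d, hab, hcd, hac, had, hbc, hbd⟩ := hM.exists_disjoint_edges hM1
  obtain ⟨s, t, hst, hs, ht⟩ :=
    exists_two_orig_notMem_of_root_mem hS hg hr hab hcd hac had hbc hbd
  have hA2 : #{x | orig x ∈ S} + 2 ≤ Fintype.card V := by
    rw [← card_pair hst, ← card_union_of_disjoint (by simp [hs, ht])]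
    exact card_le_univ _
  have := hM.two_mul_card_le
  omega

theorem eq_of_orig_mem_of_twin_mem (hS : IsGPSet (Mycielskian G) S) (hg : 6 ≤ G.egirth)
    (hu : orig u ∈ S) (hu' : twin u ∈ S) (huv : G.Adj u v) (hv : twin v ∈ S)
    (hx : orig x ∈ S) (hx' : twin x ∈ S) : x = u := by
  by_contra hxu
  have hux : ¬ G.Adj u x := fun h => orig_notMem_of_adj hS hu hu' h hx
  obtain ⟨m, hum, hmx⟩ := (adj_or_exists_adj_adj_of_twin_mem hS hu hv huv hx').resolve_left hux
  have hxv : ¬ G.Adj x v := fun h =>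
    (orig_notMem_and_twin_notMem_of_adj_of_adj hS hu hx (Ne.symm hxu) hux huv h.symm).2 hv
  have hno : ∀ m', G.Adj x m' → ¬ G.Adj m' v := by
    intro m' hxm' hm'v
    rcases eq_or_ne m' m with rfl | hm'm
    · exact G.not_adj_of_adj_of_adj (lt_of_lt_of_le (by decide) hg) huv hm'v.symm hum.symm
    · have := hg.trans <| egirth_le_five huv hm'v.symm hxm'.symm hmx.symm hum.symm
        (by rintro rfl; exact hux hxm'.symm) (Ne.symm hxu) (by rintro rfl; exact hux huv)
        (by rintro rfl; exact hxv hmx.symm) hm'm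
      exact absurd this (by decide)
  -- hence `x m u v'` is a geodesic of `μ(G)` through `u`
  exact hS.notMem_of_mem_support hx hv
    (.cons (adj_orig_orig.2 hmx.symm)
      (.cons (adj_orig_orig.2 hum.symm) (.cons (adj_orig_twin.2 huv) .nil)))
    (three_le_length_orig_twin hxv hno) (by simp) (by simpa using Ne.symm hxu) (by simp) hu

theorem orig_notMem_of_forall_mem (hS : IsGPSet (Mycielskian G) S) (hu : orig u ∈ S)
    (hu' : twin u ∈ S) (huv : G.Adj u v) (hv : twin v ∈ S)
    (hcov : ∀ t, orig t ∈ S ∨ twin t ∈ S) (hxu : x ≠ u) (hxc : G.Adj x c) :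
    orig x ∉ S := by
  intro hx
  have hux : ¬ G.Adj u x := fun h => orig_notMem_of_adj hS hu hu' h hx
  by_cases hcom : ∃ m, G.Adj u m ∧ G.Adj m x
  · obtain ⟨m, hum, hmx⟩ := hcom
    have hm := orig_notMem_and_twin_notMem_of_adj_of_adj hS hu hx hxu.symm hux hum hmx
    exact (hcov m).elim hm.1 hm.2
  push Not at hcom
  obtain ⟨a, b, hua, hab, hbx⟩ : ∃ a b, G.Adj u a ∧ G.Adj a b ∧ G.Adj b x := by
    by_contra! h
    exact (root_notMem_and_twin_notMem_of_far hS hu hx hxu.symm hux hcom h huv hxc).2 hv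
  have ha := orig_notMem_and_twin_notMem_of_path_three hS hu hx hxu.symm hux hcom hua hab hbx
  exact (hcov a).elim ha.1 ha.2

theorem eq_or_eq_of_adj_of_forall_mem (hS : IsGPSet (Mycielskian G) S) (hg : 3 < G.egirth)
    (hu : orig u ∈ S) (hu' : twin u ∈ S) (huv : G.Adj u v) (hv : twin v ∈ S)
    (hcov : ∀ t, orig t ∈ S ∨ twin t ∈ S) (hab : G.Adj a b) : a = v ∨ b = v := by
  have hnotMem : ∀ x c, x ≠ u → G.Adj x c → orig x ∉ S := fun _ _ =>
    orig_notMem_of_forall_mem hS hu hu' huv hv hcov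
  have hN : ∀ z, G.Adj u z → z = v := fun z huz =>
    twin_eq_of_orig_mem hS hu ((hcov z).resolve_left (hnotMem z u huz.ne' huz.symm)) hv huz huv
  have hN₂ : ∀ w c, w ≠ u → G.Adj w c → w = v ∨ G.Adj v w := fun w c hwu hwc =>
    have hw := (hcov w).resolve_left (hnotMem w c hwu hwc)
    (adj_or_exists_adj_adj_of_twin_mem hS hu hv huv hw).imp (hN w) fun ⟨m, hum, hmw⟩ =>
      hN m hum ▸ hmw
  by_contra! h
  rcases eq_or_ne a u with rfl | hau
  · exact h.2 (hN b hab)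
  rcases eq_or_ne b u with rfl | hbu
  · exact h.1 (hN a hab.symm)
  exact G.not_adj_of_adj_of_adj hg ((hN₂ a b hau hab).resolve_left h.1) hab
    ((hN₂ b a hbu hab.symm).resolve_left h.2).symm

theorem ncard_add_two_mul_card_le_of_doubled [Fintype V] {M : Finset (Sym2 V)}
    (hS : IsGPSet (Mycielskian G) S) (hn : 3 ≤ Fintype.card V) (hg : 6 ≤ G.egirth)
    (hr : none ∉ S) (hu : orig u ∈ S) (hu' : twin u ∈ S) (huv : G.Adj u v) (hv : twin v ∈ S)
    (hM : G.IsMatchingEdgeSet M) : S.ncard + 2 * #M ≤ 2 * Fintype.card V := by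
  classical
  rw [ncard_eq, if_neg hr, zero_add, ← card_union_add_card_inter]
  set A : Finset V := {x | orig x ∈ S}
  set B : Finset V := {x | twin x ∈ S}
  have hAB : #(A ∩ B) ≤ 1 := card_le_one.2 fun x hx y hy => by
    simp only [A, B, mem_inter, mem_filter, mem_univ, true_and] at hx hy
    rw [eq_of_orig_mem_of_twin_mem hS hg hu hu' huv hv hx.1 hx.2,
      eq_of_orig_mem_of_twin_mem hS hg hu hu' huv hv hy.1 hy.2]
  rcases le_or_gt #M 1 with hM1 | hM1
  · have := card_le_univ (A ∪ B)
    omega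
  obtain ⟨a, b, c, d, hab, hcd, hac, had, hbc, hbd⟩ := hM.exists_disjoint_edges hM1
  obtain ⟨t, ht⟩ : ∃ t, t ∉ A ∪ B := by
    by_contra! hcov
    have hcov' : ∀ t, orig t ∈ S ∨ twin t ∈ S := fun t => by simpa [A, B] using hcov t
    have hg' : 3 < G.egirth := lt_of_lt_of_le (by decide) hg
    rcases eq_or_eq_of_adj_of_forall_mem hS hg' hu hu' huv hv hcov' hab with rfl | rfl <;>
      rcases eq_or_eq_of_adj_of_forall_mem hS hg' hu hu' huv hv hcov' hcd with rfl | rfl <;>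
      contradiction
  have := card_lt_univ_of_notMem ht
  have := hM.two_mul_card_le
  omega

theorem ncard_add_two_mul_card_le_of_twin_notMem [Fintype V] {M : Finset (Sym2 V)}
    (hS : IsGPSet (Mycielskian G) S) (hr : none ∉ S)
    (hdoubled : ∀ u v, orig u ∈ S → twin u ∈ S → G.Adj u v → twin v ∉ S)
    (hM : G.IsMatchingEdgeSet M) : S.ncard + 2 * #M ≤ 2 * Fintype.card V := by
  classical
  let f : V → ℕ := fun x => (if orig x ∈ S then 1 else 0) + if twin x ∈ S then 1 else 0
  have hf : ∀ x, f x ≤ 2 := fun x => by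
    simp only [f]
    split_ifs <;> omega
  have hfM : ∀ x y, s(x, y) ∈ M → f x + f y ≤ 2 := fun x y hxy => by
    have hxy : G.Adj x y := hM.1 hxy
    have hyx := hxy.symm
    have := orig_notMem_of_adj hS (x := x) (y := y)
    have := orig_notMem_of_adj hS (x := y) (y := x)
    have := hdoubled x y
    have := hdoubled y x
    simp only [f]
    split_ifs <;> simp_all
  rw [ncard_eq, if_neg hr, zero_add, card_filter, card_filter, ← sum_add_distrib]
  exact hM.sum_add_two_mul_card_le hf hfM

end Mycielskian

open Mycielskian in
/-- For a graph `G` of order `n ≥ 4` with girth at least `6` (acyclic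
graphs have infinite girth, so qualify) and matching number `ν(G)`,
`gp(μ(G)) ≤ 2n - 2ν(G)`. -/
theorem gpNumber_mycielskian_girth_bound [Fintype V] (G : SimpleGraph V)
    (hn : 4 ≤ Fintype.card V) (hg : 6 ≤ G.egirth) :
    gpNumber (Mycielskian G) ≤ 2 * Fintype.card V - 2 * matchingNumber G := by
  obtain ⟨M, hM, hMcard⟩ := G.exists_isMatchingEdgeSet_card_eq_matchingNumber
  rw [← hMcard]
  refine csSup_le ⟨0, ∅, fun _ h => absurd h (Set.notMem_empty _), Set.ncard_empty _⟩ ?_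
  rintro _ ⟨S, hS, rfl⟩
  suffices S.ncard + 2 * #M ≤ 2 * Fintype.card V by omega
  by_cases hr : none ∈ S
  · exact ncard_add_two_mul_card_le_of_root_mem hS hn (lt_of_lt_of_le (by decide) hg) hr hM
  by_cases hdoubled : ∃ u v, orig u ∈ S ∧ twin u ∈ S ∧ G.Adj u v ∧ twin v ∈ S
  · obtain ⟨u, v, hu, hu', huv, hv⟩ := hdoubled
    exact ncard_add_two_mul_card_le_of_doubled hS (by omega) hg hr hu hu' huv hv hM
  push Not at hdoubled
  exact ncard_add_two_mul_card_le_of_twin_notMem hS hr hdoubled hM
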